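/- arXiv:2507.00910 — 3 statements merged into one kernel-verified Lean document; each statement's English description precedes it below -/
import Mathlib

section
/- For every p ≥ 1 there exists a constant C = C(p) > 0 such that for every x = (x₁, x₂) ∈ ℝ²₊ and every α > 0, one has ∫_{{y ∈ ℝ²₊ : |x − y| < α}} G(x, y)^p dy ≤ C · x₂ · α, where G(x, y) = (1/(4π)) log(1 + 4x₂y₂/|x − y|²). -/
/-!
With `r = |x - y|` one has `y₂ ≤ x₂ + r`, so `4 x₂ y₂ / r² ≤ (1 + 2 x₂ / r)² - 1` and
`G(x, y) ≤ (2π)⁻¹ log (1 + 2 x₂ / r)`. Since `log (1 + s) ≤ p s^{1/p}` for `p ≥ 1`, this gives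
`G(x, y)^p ≤ (p / 2π)^p · 2 x₂ / r`, and in polar coordinates `∫_{|x - y| < α} r⁻¹ dy = 2πα`.
-/

open MeasureTheory Real Set

noncomputable def G (x y : ℝ × ℝ) : ℝ :=
  (1 / (4 * π)) * Real.log (1 + 4 * x.2 * y.2 / ((x.1 - y.1)^2 + (x.2 - y.2)^2))

theorem Real.log_one_add_le_mul_rpow_inv {p s : ℝ} (hp : 1 ≤ p) (hs : 0 ≤ s) :
    log (1 + s) ≤ p * s ^ p⁻¹ := by
  have hp₀ : 0 < p := zero_lt_one.trans_le hp
  have hroot : (1 + s) ^ p⁻¹ ≤ 1 + s ^ p⁻¹ := by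
    simpa only [one_rpow] using
      rpow_add_le_add_rpow zero_le_one hs (inv_nonneg.2 hp₀.le) (inv_le_one_of_one_le₀ hp)
  calc log (1 + s) = p * log ((1 + s) ^ p⁻¹) := by
        rw [log_rpow (by positivity), mul_inv_cancel_left₀ hp₀.ne']
    _ ≤ p * log (1 + s ^ p⁻¹) := by gcongr
    _ ≤ p * s ^ p⁻¹ := by
        gcongr
        linarith [log_le_sub_one_of_pos (by positivity : 0 < 1 + s ^ p⁻¹)]

theorem G_nonneg {x y : ℝ × ℝ} (hx : 0 ≤ x.2) (hy : 0 ≤ y.2) : 0 ≤ G x y := by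
  unfold G
  have : 0 ≤ 4 * x.2 * y.2 / ((x.1 - y.1) ^ 2 + (x.2 - y.2) ^ 2) := by positivity
  exact mul_nonneg (by positivity) (log_nonneg (by linarith))

theorem G_le_log_one_add {x y : ℝ × ℝ} (hx : 0 ≤ x.2) (hy : 0 ≤ y.2) :
    G x y ≤ (2 * π)⁻¹ * log (1 + 2 * x.2 / √((x.1 - y.1) ^ 2 + (x.2 - y.2) ^ 2)) := by
  set r := √((x.1 - y.1) ^ 2 + (x.2 - y.2) ^ 2)
  have hr2 : r ^ 2 = (x.1 - y.1) ^ 2 + (x.2 - y.2) ^ 2 := sq_sqrt (by positivity)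
  have hr0 : 0 ≤ r := sqrt_nonneg _
  unfold G
  rw [← hr2]
  rcases hr0.eq_or_lt with hr | hr
  · simp [← hr]
  have hy_le : y.2 ≤ x.2 + r := by
    have : |x.2 - y.2| ≤ r := abs_le_sqrt (le_add_of_nonneg_left (sq_nonneg (x.1 - y.1)))
    linarith [neg_abs_le (x.2 - y.2)]
  have key : 4 * x.2 * y.2 / r ^ 2 ≤ (1 + 2 * x.2 / r) ^ 2 - 1 := by
    have : (1 + 2 * x.2 / r) ^ 2 - 1 = 4 * x.2 * (x.2 + r) / r ^ 2 := by field_simp; ring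
    rw [this]
    gcongr
  calc 1 / (4 * π) * log (1 + 4 * x.2 * y.2 / r ^ 2)
      ≤ 1 / (4 * π) * log ((1 + 2 * x.2 / r) ^ 2) := by gcongr; linarith
    _ = (2 * π)⁻¹ * log (1 + 2 * x.2 / r) := by
        rw [log_pow]; field_simp; ring

theorem G_rpow_le {p : ℝ} (hp : 1 ≤ p) {x y : ℝ × ℝ} (hx : 0 ≤ x.2) (hy : 0 ≤ y.2) :
    G x y ^ p ≤ (p / (2 * π)) ^ p * (2 * x.2 / √((x.1 - y.1) ^ 2 + (x.2 - y.2) ^ 2)) := by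
  have hp₀ : 0 < p := zero_lt_one.trans_le hp
  set s := 2 * x.2 / √((x.1 - y.1) ^ 2 + (x.2 - y.2) ^ 2)
  have hs : 0 ≤ s := by positivity
  have hG : G x y ≤ p / (2 * π) * s ^ p⁻¹ :=
    calc G x y ≤ (2 * π)⁻¹ * log (1 + s) := G_le_log_one_add hx hy
      _ ≤ (2 * π)⁻¹ * (p * s ^ p⁻¹) := by gcongr; exact log_one_add_le_mul_rpow_inv hp hs
      _ = p / (2 * π) * s ^ p⁻¹ := by ring
  calc G x y ^ p ≤ (p / (2 * π) * s ^ p⁻¹) ^ p := by gcongr; exact G_nonneg hx hy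
    _ = (p / (2 * π)) ^ p * s := by
        rw [mul_rpow (by positivity) (by positivity), rpow_inv_rpow hs hp₀.ne']

theorem lintegral_inv_sqrt_ball {α : ℝ} (hα : 0 ≤ α) :
    ∫⁻ z in {z : ℝ × ℝ | z.1 ^ 2 + z.2 ^ 2 < α ^ 2}, ENNReal.ofReal (√(z.1 ^ 2 + z.2 ^ 2))⁻¹ =
      ENNReal.ofReal (2 * π * α) := by
  have hball : MeasurableSet {z : ℝ × ℝ | z.1 ^ 2 + z.2 ^ 2 < α ^ 2} :=
    measurableSet_lt (by fun_prop) measurable_const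
  have hlt : MeasurableSet {q : ℝ × ℝ | q.1 < α} := measurableSet_lt measurable_fst measurable_const
  rw [← lintegral_indicator hball, ← lintegral_comp_polarCoord_symm]
  have polar : ∀ q ∈ polarCoord.target,
      ENNReal.ofReal q.1 • {z : ℝ × ℝ | z.1 ^ 2 + z.2 ^ 2 < α ^ 2}.indicator
        (fun z ↦ ENNReal.ofReal (√(z.1 ^ 2 + z.2 ^ 2))⁻¹) (polarCoord.symm q) =
      {q : ℝ × ℝ | q.1 < α}.indicator 1 q := by
    intro q hq
    have hρ : 0 < q.1 := hq.1
    -- the radial coordinate of `polarCoord z` is `√(z.1 ^ 2 + z.2 ^ 2)`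
    have hnorm : √((polarCoord.symm q).1 ^ 2 + (polarCoord.symm q).2 ^ 2) = q.1 :=
      congrArg Prod.fst (polarCoord.right_inv hq)
    have hmem : polarCoord.symm q ∈ {z : ℝ × ℝ | z.1 ^ 2 + z.2 ^ 2 < α ^ 2} ↔ q.1 < α := by
      rw [mem_ofPred_eq, ← sqrt_lt (by positivity) hα, hnorm]
    by_cases h : q.1 < α
    · rw [indicator_of_mem (hmem.2 h), indicator_of_mem (show q ∈ {q : ℝ × ℝ | q.1 < α} from h),
        hnorm, smul_eq_mul, ← ENNReal.ofReal_mul hρ.le, mul_inv_cancel₀ hρ.ne']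
      simp
    · rw [indicator_of_notMem (mt hmem.1 h),
        indicator_of_notMem (show q ∉ {q : ℝ × ℝ | q.1 < α} from h), smul_zero]
  rw [setLIntegral_congr_fun polarCoord.open_target.measurableSet polar, lintegral_indicator_one hlt,
    Measure.restrict_apply hlt]
  have : {q : ℝ × ℝ | q.1 < α} ∩ polarCoord.target = Ioo 0 α ×ˢ Ioo (-π) π := by
    ext q
    simp only [mem_inter_iff, mem_ofPred_eq, polarCoord_target, mem_prod, mem_Ioi, mem_Ioo]
    tauto
  rw [this, Measure.volume_eq_prod, Measure.prod_prod, Real.volume_Ioo, Real.volume_Ioo,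
    ← ENNReal.ofReal_mul (by linarith)]
  congr 1
  ring

theorem lintegral_inv_dist_ball (x : ℝ × ℝ) {α : ℝ} (hα : 0 ≤ α) :
    ∫⁻ y in {y : ℝ × ℝ | (x.1 - y.1) ^ 2 + (x.2 - y.2) ^ 2 < α ^ 2},
        ENNReal.ofReal (√((x.1 - y.1) ^ 2 + (x.2 - y.2) ^ 2))⁻¹ =
      ENNReal.ofReal (2 * π * α) := by
  calc _ = ∫⁻ y, {z : ℝ × ℝ | z.1 ^ 2 + z.2 ^ 2 < α ^ 2}.indicator
          (fun z ↦ ENNReal.ofReal (√(z.1 ^ 2 + z.2 ^ 2))⁻¹) (x - y) := by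
        rw [← lintegral_indicator (measurableSet_lt (by fun_prop) measurable_const)]
        rfl
    _ = _ := by
        rw [lintegral_sub_left_eq_self, lintegral_indicator (measurableSet_lt (by fun_prop)
          measurable_const), lintegral_inv_sqrt_ball hα]

theorem integrableOn_inv_dist_ball (x : ℝ × ℝ) {α : ℝ} (hα : 0 ≤ α) :
    IntegrableOn (fun y : ℝ × ℝ ↦ (√((x.1 - y.1) ^ 2 + (x.2 - y.2) ^ 2))⁻¹)
      {y : ℝ × ℝ | (x.1 - y.1) ^ 2 + (x.2 - y.2) ^ 2 < α ^ 2} := by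
  refine ⟨(by fun_prop : Measurable _).aestronglyMeasurable, ?_⟩
  rw [hasFiniteIntegral_iff_ofReal (ae_of_all _ fun _ ↦ by positivity),
    lintegral_inv_dist_ball x hα]
  exact ENNReal.ofReal_lt_top

theorem setIntegral_inv_dist_ball (x : ℝ × ℝ) {α : ℝ} (hα : 0 ≤ α) :
    ∫ y in {y : ℝ × ℝ | (x.1 - y.1) ^ 2 + (x.2 - y.2) ^ 2 < α ^ 2},
        (√((x.1 - y.1) ^ 2 + (x.2 - y.2) ^ 2))⁻¹ = 2 * π * α := by
  rw [integral_eq_lintegral_of_nonneg_ae (ae_of_all _ fun _ ↦ by positivity)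
    (integrableOn_inv_dist_ball x hα).aestronglyMeasurable, lintegral_inv_dist_ball x hα,
    ENNReal.toReal_ofReal (by positivity)]

theorem greens_function_ball_bound (p : ℝ) (hp : 1 ≤ p) :
    ∃ C : ℝ, 0 < C ∧ ∀ x : ℝ × ℝ, 0 < x.2 → ∀ α : ℝ, 0 < α →
      (∫ y in {y : ℝ × ℝ | 0 < y.2 ∧ (x.1 - y.1)^2 + (x.2 - y.2)^2 < α^2}, (G x y) ^ p)
        ≤ C * x.2 * α := by
  refine ⟨4 * π * (p / (2 * π)) ^ p, by positivity, fun x hx α hα ↦ ?_⟩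
  set B := {y : ℝ × ℝ | (x.1 - y.1) ^ 2 + (x.2 - y.2) ^ 2 < α ^ 2}
  set S := {y : ℝ × ℝ | 0 < y.2 ∧ (x.1 - y.1) ^ 2 + (x.2 - y.2) ^ 2 < α ^ 2}
  set K := (p / (2 * π)) ^ p * (2 * x.2)
  have hS : MeasurableSet S := (measurableSet_lt measurable_const measurable_snd).inter
    (measurableSet_lt (by fun_prop : Measurable fun y : ℝ × ℝ ↦ (x.1 - y.1) ^ 2 + (x.2 - y.2) ^ 2)
      measurable_const)
  have hint : IntegrableOn (fun y ↦ K * (√((x.1 - y.1) ^ 2 + (x.2 - y.2) ^ 2))⁻¹) B :=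
    (integrableOn_inv_dist_ball x hα.le).const_mul K
  calc ∫ y in S, G x y ^ p ≤ ∫ y in S, K * (√((x.1 - y.1) ^ 2 + (x.2 - y.2) ^ 2))⁻¹ := by
        refine integral_mono_of_nonneg
          (ae_restrict_of_forall_mem hS fun y hy ↦ rpow_nonneg (G_nonneg hx.le hy.1.le) p)
          (hint.mono_set fun y hy ↦ hy.2)
          (ae_restrict_of_forall_mem hS fun y hy ↦ ?_)
        simpa only [K, mul_assoc, div_eq_mul_inv] using G_rpow_le hp hx.le hy.1.le
    _ ≤ ∫ y in B, K * (√((x.1 - y.1) ^ 2 + (x.2 - y.2) ^ 2))⁻¹ :=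
        setIntegral_mono_set hint (ae_of_all _ fun _ ↦ by positivity)
          (Filter.Eventually.of_forall fun y hy ↦ hy.2)
    _ = 4 * π * (p / (2 * π)) ^ p * x.2 * α := by
        rw [integral_const_mul, setIntegral_inv_dist_ball x hα.le]
        ring
end

section
/- Let ω : ℝ²₊ → [0, ∞) be integrable and suppose the marginal function m(y₁) := ∫₀^∞ ω(y₁, y₂) dy₂ is even in y₁ and non-increasing on [0, ∞). Then for every A ≥ 2 and every x₁ > 0, the horizontal slab estimate ∫_{{y ∈ ℝ²₊ : |x₁ − y₁| < x₁/A}} ω(y) dy ≤ (4/A) · ‖ω‖_{L¹(ℝ²₊)} holds. -/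
open MeasureTheory Real Set

def upperHalf : Set (ℝ × ℝ) := {y : ℝ × ℝ | 0 < y.2}

/-!
The slab is `(x₁ - x₁/A, x₁ + x₁/A) × (0, ∞)`, so by Fubini its mass is the integral of the
marginal `m` over an interval of length `2x₁/A` whose left end `a = x₁ - x₁/A` is at least `x₁/2`.
Since `m` is non-increasing there, that integral is at most `(2x₁/A) m(a) ≤ (4/A) a m(a)`, and
`a m(a) ≤ ∫₀^a m ≤ ‖ω‖₁` (Chebyshev for a monotone function).
-/

lemma upperHalf_eq_univ_prod : upperHalf = (univ : Set ℝ) ×ˢ Ioi 0 := by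
  ext y; simp [upperHalf]

lemma setOf_abs_sub_lt_eq_Ioo_prod (x r : ℝ) :
    {y : ℝ × ℝ | 0 < y.2 ∧ |x - y.1| < r} = Ioo (x - r) (x + r) ×ˢ Ioi 0 := by
  ext y
  simp only [mem_ofPred_eq, mem_prod, mem_Ioo, mem_Ioi, abs_lt]
  constructor
  · rintro ⟨hy, h₁, h₂⟩; exact ⟨⟨by linarith, by linarith⟩, hy⟩
  · rintro ⟨⟨h₁, h₂⟩, hy⟩; exact ⟨hy, by linarith, by linarith⟩

lemma setIntegral_Ioo_le_mul_of_antitoneOn {m : ℝ → ℝ} {a b : ℝ} (hab : a ≤ b)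
    (hm : AntitoneOn m (Ici a)) (hint : IntegrableOn m (Ioo a b)) :
    ∫ t in Ioo a b, m t ≤ (b - a) * m a := by
  calc ∫ t in Ioo a b, m t ≤ ∫ _ in Ioo a b, m a :=
        setIntegral_mono_on hint (integrableOn_const (by simp)) measurableSet_Ioo
          fun t ht => hm self_mem_Ici ht.1.le ht.1.le
    _ = (b - a) * m a := by rw [setIntegral_const, Real.volume_real_Ioo_of_le hab, smul_eq_mul]

lemma mul_le_integral_of_antitoneOn {m : ℝ → ℝ} {a : ℝ} (ha : 0 ≤ a) (hm0 : ∀ t, 0 ≤ m t)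
    (hm : AntitoneOn m (Ici 0)) (hint : Integrable m) :
    a * m a ≤ ∫ t, m t := by
  calc a * m a = ∫ _ in Ioc 0 a, m a := by
        rw [setIntegral_const, Real.volume_real_Ioc_of_le ha, smul_eq_mul, sub_zero]
    _ ≤ ∫ t in Ioc 0 a, m t :=
        setIntegral_mono_on (integrableOn_const (by simp)) hint.integrableOn measurableSet_Ioc
          fun t ht => hm ht.1.le ha ht.2
    _ ≤ ∫ t, m t := setIntegral_le_integral hint (Filter.Eventually.of_forall hm0)

lemma setIntegral_Ioo_le_of_antitoneOn {m : ℝ → ℝ} (hm0 : ∀ t, 0 ≤ m t)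
    (hm : AntitoneOn m (Ici 0)) (hint : Integrable m) {A x : ℝ} (hA : 2 ≤ A) (hx : 0 < x) :
    ∫ t in Ioo (x - x / A) (x + x / A), m t ≤ 4 / A * ∫ t, m t := by
  set a := x - x / A
  have hA₀ : 0 < A := by linarith
  have hxA : 0 ≤ x / A := by positivity
  have hx_le : x ≤ 2 * a := by
    have : x / A ≤ x / 2 := div_le_div_of_nonneg_left hx.le two_pos hA
    linarith
  have ha : 0 ≤ a := by linarith
  calc ∫ t in Ioo a (x + x / A), m t ≤ (x + x / A - a) * m a :=
        setIntegral_Ioo_le_mul_of_antitoneOn (by linarith)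
          (hm.mono (Ici_subset_Ici.mpr ha)) hint.integrableOn
    _ = 2 / A * (x * m a) := by ring
    _ ≤ 2 / A * (2 * (a * m a)) :=
        mul_le_mul_of_nonneg_left (by nlinarith [hm0 a]) (by positivity)
    _ ≤ 4 / A * ∫ t, m t := by
        rw [← mul_assoc, show 2 / A * 2 = 4 / A by ring]
        gcongr
        exact mul_le_integral_of_antitoneOn ha hm0 hm hint

theorem steiner_slab_estimate_general (ω : ℝ × ℝ → ℝ) (h0 : ∀ y, 0 ≤ ω y)
    (hint : IntegrableOn ω upperHalf)
    (hmono : AntitoneOn (fun t : ℝ => ∫ s in Ioi (0:ℝ), ω (t, s)) (Ici 0)) :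
    ∀ A : ℝ, 2 ≤ A → ∀ x₁ : ℝ, 0 < x₁ →
      (∫ y in {y : ℝ × ℝ | 0 < y.2 ∧ |x₁ - y.1| < x₁ / A}, ω y)
        ≤ (4 / A) * ∫ y in upperHalf, ω y := by
  intro A hA x₁ hx₁
  rw [upperHalf_eq_univ_prod, Measure.volume_eq_prod] at hint ⊢
  have hslab := setOf_abs_sub_lt_eq_Ioo_prod x₁ (x₁ / A)
  have hint_slab : IntegrableOn ω (Ioo (x₁ - x₁ / A) (x₁ + x₁ / A) ×ˢ Ioi 0) :=
    hint.mono_set (prod_mono (subset_univ _) subset_rfl)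
  have hmarginal : Integrable fun t : ℝ => ∫ s in Ioi (0:ℝ), ω (t, s) := by
    have h : Integrable ω ((volume.restrict univ).prod (volume.restrict (Ioi 0))) := by
      rwa [Measure.prod_restrict]
    simpa using h.integral_prod_left
  rw [hslab, setIntegral_prod _ hint_slab, setIntegral_prod _ hint, Measure.restrict_univ]
  exact setIntegral_Ioo_le_of_antitoneOn (fun t => integral_nonneg fun s => h0 _) hmono
    hmarginal hA hx₁

theorem steiner_slab_estimate (ω : ℝ × ℝ → ℝ) (h0 : ∀ y, 0 ≤ ω y)
    (hint : IntegrableOn ω upperHalf)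
    (heven : ∀ t : ℝ, (∫ s in Ioi (0:ℝ), ω (-t, s)) = ∫ s in Ioi (0:ℝ), ω (t, s))
    (hmono : AntitoneOn (fun t : ℝ => ∫ s in Ioi (0:ℝ), ω (t, s)) (Ici 0)) :
    ∀ A : ℝ, 2 ≤ A → ∀ x₁ : ℝ, 0 < x₁ →
      (∫ y in {y : ℝ × ℝ | 0 < y.2 ∧ |x₁ - y.1| < x₁ / A}, ω y)
        ≤ (4 / A) * ∫ y in upperHalf, ω y :=
  steiner_slab_estimate_general ω h0 hint hmono
end

section
/- Let g : ℝ → [0, ∞) be integrable, even, and non-increasing on [0, ∞), and let c > 0. Define h(x) := ∫_ℝ g(y) · c / ((y − x)² + c²) dy. Then h is even (h(x) = h(−x) for all x) and h is non-increasing on [0, ∞); in particular h attains its maximum at x = 0. -/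
/-!
Write `h x = ∫ g y K (y - x) dy` with `K` even and decreasing in `|t|`. For `0 ≤ a ≤ b`, the
substitution `y ↦ a + b - y` (reflection in the midpoint of `[a, b]`) turns `h b` into
`∫ g (a + b - y) K (y - a) dy` and `h a` into `∫ g (a + b - y) K (y - b) dy`, so
`2 (h a - h b) = ∫ (g (a + b - y) - g y) (K (y - b) - K (y - a)) dy`. The integrand is
nonnegative: `y` is closer to `b` than to `a` exactly when `|a + b - y| ≤ |y|`, so both factors
change sign together.
-/

open MeasureTheory Set

namespace Function.Even

variable {α β : Type*} [AddCommGroup α] [LinearOrder α] [IsOrderedAddMonoid α] [Preorder β]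
  {f : α → β}

lemma le_of_abs_le (hf : f.Even) (hm : AntitoneOn f (Ici 0)) {u v : α} (h : |u| ≤ |v|) :
    f v ≤ f u := by
  have habs : ∀ w, f |w| = f w := fun w => by
    rcases abs_choice w with hw | hw <;> rw [hw]
    exact hf w
  rw [← habs u, ← habs v]
  exact hm (abs_nonneg u) (abs_nonneg v) h

end Function.Even

section Convolution

variable {g K : ℝ → ℝ}

lemma sub_mul_sub_nonneg_of_even_antitoneOn (hge : g.Even) (hgm : AntitoneOn g (Ici 0))
    (hKe : K.Even) (hKm : AntitoneOn K (Ici 0)) {a b : ℝ} (hab0 : 0 ≤ a + b) (hab : a ≤ b)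
    (y : ℝ) : 0 ≤ (g (a + b - y) - g y) * (K (y - b) - K (y - a)) := by
  rcases le_total (a + b) (2 * y) with hy | hy
  · have hg : g y ≤ g (a + b - y) := hge.le_of_abs_le hgm (sq_le_sq.1 (by nlinarith))
    have hK : K (y - a) ≤ K (y - b) := hKe.le_of_abs_le hKm (sq_le_sq.1 (by nlinarith))
    exact mul_nonneg (sub_nonneg.2 hg) (sub_nonneg.2 hK)
  · have hg : g (a + b - y) ≤ g y := hge.le_of_abs_le hgm (sq_le_sq.1 (by nlinarith))
    have hK : K (y - b) ≤ K (y - a) := hKe.le_of_abs_le hKm (sq_le_sq.1 (by nlinarith))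
    exact mul_nonneg_of_nonpos_of_nonpos (sub_nonpos.2 hg) (sub_nonpos.2 hK)

lemma integrable_mul_comp_sub (hgi : Integrable g) (hK0 : ∀ t, 0 ≤ K t) (hKe : K.Even)
    (hKm : AntitoneOn K (Ici 0)) (hK : Measurable K) (x : ℝ) :
    Integrable fun y => g y * K (y - x) :=
  hgi.mul_bdd (c := K 0) (hK.comp (measurable_sub_const x)).aestronglyMeasurable
    (.of_forall fun y => by
      rw [Real.norm_eq_abs, abs_of_nonneg (hK0 _)]
      exact hKe.le_of_abs_le hKm (by simp))

lemma even_integral_mul_comp_sub (hge : g.Even) (hKe : K.Even) :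
    Function.Even fun x => ∫ y, g y * K (y - x) := fun x => by
  show ∫ y, g y * K (y - -x) = ∫ y, g y * K (y - x)
  rw [← integral_neg_eq_self]
  congr 1 with y
  rw [hge, ← hKe]
  ring_nf

lemma integral_mul_comp_sub_eq_reflect (hKe : K.Even) (a b : ℝ) :
    ∫ y, g y * K (y - b) = ∫ y, g (a + b - y) * K (y - a) := by
  rw [← integral_sub_left_eq_self _ volume (a + b)]
  congr 1 with y
  rw [← hKe]
  ring_nf

lemma antitoneOn_integral_mul_comp_sub (hgi : Integrable g) (hge : g.Even)
    (hgm : AntitoneOn g (Ici 0)) (hK0 : ∀ t, 0 ≤ K t) (hKe : K.Even)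
    (hKm : AntitoneOn K (Ici 0)) (hK : Measurable K) :
    AntitoneOn (fun x => ∫ y, g y * K (y - x)) (Ici 0) := by
  intro a ha b hb hab
  have hint := integrable_mul_comp_sub (g := g) hgi hK0 hKe hKm hK
  have hint' := integrable_mul_comp_sub (hgi.comp_sub_left (a + b)) hK0 hKe hKm hK
  have key : ∫ y, (g y * K (y - b) + g (a + b - y) * K (y - a)) ≤
      ∫ y, (g y * K (y - a) + g (a + b - y) * K (y - b)) :=
    integral_mono ((hint b).add (hint' a)) ((hint a).add (hint' b)) fun y => by
      have := sub_mul_sub_nonneg_of_even_antitoneOn hge hgm hKe hKm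
        (add_nonneg ha hb) hab y
      linear_combination this
  have hreflect_b := integral_mul_comp_sub_eq_reflect (g := g) hKe a b
  have hreflect_a := integral_mul_comp_sub_eq_reflect (g := g) hKe b a
  rw [add_comm b a] at hreflect_a
  rw [integral_add (hint b) (hint' a), integral_add (hint a) (hint' b)] at key
  dsimp only
  linarith

end Convolution

lemma even_div_sq_add_sq (c : ℝ) : Function.Even fun t : ℝ => c / (t ^ 2 + c ^ 2) :=
  fun t => by simp only [even_two, Even.neg_pow]

lemma antitoneOn_div_sq_add_sq {c : ℝ} (hc : 0 ≤ c) :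
    AntitoneOn (fun t : ℝ => c / (t ^ 2 + c ^ 2)) (Ici 0) := by
  intro s hs t _ hst
  rcases hc.eq_or_lt with rfl | hc
  · simp
  · exact div_le_div_of_nonneg_left hc.le (by positivity) (by gcongr)

theorem poisson_convolution_symmetric_decreasing_general (g : ℝ → ℝ)
    (hgi : Integrable g) (hge : ∀ y, g (-y) = g y) (hgm : AntitoneOn g (Ici 0))
    (c : ℝ) (hc : 0 < c) :
    (∀ x : ℝ, (∫ y, g y * (c / ((y - x)^2 + c^2))) =
      ∫ y, g y * (c / ((y - (-x))^2 + c^2))) ∧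
    AntitoneOn (fun x : ℝ => ∫ y, g y * (c / ((y - x)^2 + c^2))) (Ici 0) ∧
    (∀ x : ℝ, (∫ y, g y * (c / ((y - x)^2 + c^2))) ≤
      ∫ y, g y * (c / ((y - 0)^2 + c^2))) := by
  have heven := even_integral_mul_comp_sub hge (even_div_sq_add_sq c)
  have hanti := antitoneOn_integral_mul_comp_sub hgi hge hgm (fun t => by positivity)
    (even_div_sq_add_sq c) (antitoneOn_div_sq_add_sq hc.le) (by fun_prop)
  exact ⟨fun x => (heven x).symm, hanti, fun x => heven.le_of_abs_le hanti (by simp)⟩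

theorem poisson_convolution_symmetric_decreasing (g : ℝ → ℝ) (hg0 : ∀ y, 0 ≤ g y)
    (hgi : Integrable g) (hge : ∀ y, g (-y) = g y) (hgm : AntitoneOn g (Ici 0))
    (c : ℝ) (hc : 0 < c) :
    (∀ x : ℝ, (∫ y, g y * (c / ((y - x)^2 + c^2))) =
      ∫ y, g y * (c / ((y - (-x))^2 + c^2))) ∧
    AntitoneOn (fun x : ℝ => ∫ y, g y * (c / ((y - x)^2 + c^2))) (Ici 0) ∧
    (∀ x : ℝ, (∫ y, g y * (c / ((y - x)^2 + c^2))) ≤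
      ∫ y, g y * (c / ((y - 0)^2 + c^2))) :=
  poisson_convolution_symmetric_decreasing_general g hgi hge hgm c hc
end
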